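/- arXiv:1503.02170 — 4 statements merged into one kernel-verified Lean document; each statement's English description precedes it below -/
import Mathlib

section
/- Let m, n be positive integers and let A be an m×n matrix with integer entries, regarded as a ℤ-linear map f : ℤ^n → ℤ^m. Then the following are equivalent: (1) there exists an n×m integer matrix B with A·B equal to the m×m identity matrix (equivalently, a ℤ-linear map g : ℤ^m → ℤ^n with f∘g = id); (2) m ≤ n and the greatest common divisor of all m×m minors of A (the determinants of the m×m submatrices of A obtained by selecting m of the n columns) is 1. -/
/-!
Expanding `det (A * B)` by multilinearity in the columns of `A * B` writes it as a combination
of the minors `det (A.submatrix id f)`, `f : Fin m → Fin n`. Such a minor vanishes unless `f` is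
injective, and is then `± det (A.submatrix id c)` for the increasing `c` with the same image.
Hence the gcd of the maximal minors divides `det 1 = 1`, and for `m > n` every term vanishes.
Conversely, `A` times the adjugate of its square submatrix on columns `c`, placed in the rows `c`,
is `det (A.submatrix id c) • 1`, so a Bézout combination of the maximal minors yields a right
inverse.
-/

open Finset

namespace Matrix

variable {R : Type*} [CommRing R]

theorem det_mul_eq_sum_prod_mul_det_submatrix {m n : Type*} [Fintype m] [DecidableEq m]
    [Fintype n] [DecidableEq n] (A : Matrix m n R) (B : Matrix n m R) :
    (A * B).det = ∑ f : m → n, (∏ i, B (f i) i) * (A.submatrix id f).det := by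
  have hrows : (A * B)ᵀ = fun i => ∑ k, B k i • Aᵀ k := by
    ext i j
    simp [mul_apply, mul_comm]
  rw [← det_transpose, hrows]
  have hexpand := (detRowAlternating : (m → R) [⋀^m]→ₗ[R] R).toMultilinearMap.map_sum
    (fun i k => B k i • Aᵀ k)
  simp only [AlternatingMap.coe_multilinearMap, MultilinearMap.map_smul_univ] at hexpand
  refine hexpand.trans (sum_congr rfl fun f _ => ?_)
  rw [smul_eq_mul, ← det_transpose (A.submatrix id f)]
  rfl

theorem dvd_det_submatrix_of_forall_strictMono {m : ℕ} {n : Type*} [LinearOrder n]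
    (A : Matrix (Fin m) n R) {d : R}
    (hd : ∀ c : Fin m → n, StrictMono c → d ∣ (A.submatrix id c).det) (f : Fin m → n) :
    d ∣ (A.submatrix id f).det := by
  by_cases hf : f.Injective
  · set σ := Tuple.sort f
    have hsorted : StrictMono (f ∘ σ) :=
      (Tuple.monotone_sort f).strictMono_of_injective (hf.comp σ.injective)
    have hpermute : A.submatrix id f = (A.submatrix id (f ∘ σ)).submatrix id σ.symm := by
      simp [submatrix_submatrix, Function.comp_assoc]
    rw [hpermute, det_permute']
    exact dvd_mul_of_dvd_right (hd _ hsorted) _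
  · obtain ⟨i, j, hfij, hij⟩ : ∃ i j, f i = f j ∧ i ≠ j := by
      simpa [Function.Injective] using hf
    rw [det_zero_of_column_eq hij (by simp [hfij])]
    exact dvd_zero d

theorem dvd_det_mul_of_forall_strictMono {m : ℕ} {n : Type*} [Fintype n] [LinearOrder n]
    (A : Matrix (Fin m) n R) (B : Matrix n (Fin m) R) {d : R}
    (hd : ∀ c : Fin m → n, StrictMono c → d ∣ (A.submatrix id c).det) :
    d ∣ (A * B).det := by
  rw [det_mul_eq_sum_prod_mul_det_submatrix]
  exact dvd_sum fun f _ => dvd_mul_of_dvd_right (dvd_det_submatrix_of_forall_strictMono A hd f) _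

theorem exists_strictMono_of_mul_eq_one [Nontrivial R] {m : ℕ} {n : Type*} [Fintype n]
    [LinearOrder n] {A : Matrix (Fin m) n R} {B : Matrix n (Fin m) R} (h : A * B = 1) :
    ∃ c : Fin m → n, StrictMono c := by
  by_contra! hnone
  have hzero : (0 : R) ∣ (A * B).det :=
    dvd_det_mul_of_forall_strictMono A B fun c hc => absurd hc (hnone c)
  rw [h, det_one, zero_dvd_iff] at hzero
  exact one_ne_zero hzero

theorem mul_one_submatrix_mul_adjugate {m n : Type*} [Fintype m] [DecidableEq m]
    [Fintype n] [DecidableEq n] (A : Matrix m n R) (c : m → n) :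
    A * ((1 : Matrix n n R).submatrix id c * (A.submatrix id c).adjugate) =
      (A.submatrix id c).det • 1 := by
  rw [← Matrix.mul_assoc, ← Equiv.coe_refl, mul_submatrix_one, Equiv.refl_symm, Equiv.coe_refl,
    Function.id_comp]
  exact mul_adjugate _

theorem exists_mul_eq_one_of_sum_det_submatrix_mul_eq_one {m n : Type*} [Fintype m]
    [DecidableEq m] [Fintype n] [DecidableEq n] (A : Matrix m n R) (s : Finset (m → n))
    (μ : (m → n) → R) (h : ∑ c ∈ s, (A.submatrix id c).det * μ c = 1) :
    ∃ B : Matrix n m R, A * B = 1 := by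
  refine ⟨∑ c ∈ s, μ c • ((1 : Matrix n n R).submatrix id c * (A.submatrix id c).adjugate),
    ?_⟩
  simp only [Matrix.mul_sum, Matrix.mul_smul, mul_one_submatrix_mul_adjugate, smul_smul,
    ← sum_smul]
  simp only [mul_comm (μ _), h, one_smul]

section GCD

variable [NormalizedGCDMonoid R]

def maxMinorsGcd {m n : ℕ} (A : Matrix (Fin m) (Fin n) R) : R :=
  ((univ : Finset (Fin m → Fin n)).filter (fun c => ∀ a b : Fin m, a < b → c a < c b)).gcd
    fun c => (A.submatrix id c).det

theorem maxMinorsGcd_dvd_det_submatrix {m n : ℕ} (A : Matrix (Fin m) (Fin n) R)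
    {c : Fin m → Fin n} (hc : StrictMono c) : A.maxMinorsGcd ∣ (A.submatrix id c).det :=
  gcd_dvd (mem_filter.2 ⟨mem_univ c, fun _ _ hab => hc hab⟩)

theorem maxMinorsGcd_eq_one_of_mul_eq_one {m n : ℕ} {A : Matrix (Fin m) (Fin n) R}
    {B : Matrix (Fin n) (Fin m) R} (h : A * B = 1) : A.maxMinorsGcd = 1 := by
  have hdvd : A.maxMinorsGcd ∣ (A * B).det :=
    dvd_det_mul_of_forall_strictMono A B fun _ hc => A.maxMinorsGcd_dvd_det_submatrix hc
  rw [h, det_one] at hdvd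
  rw [maxMinorsGcd, ← Finset.normalize_gcd, normalize_eq_one]
  exact isUnit_of_dvd_one hdvd

theorem exists_mul_eq_one_iff [Nontrivial R] [IsBezout R] {m n : ℕ}
    (A : Matrix (Fin m) (Fin n) R) :
    (∃ B : Matrix (Fin n) (Fin m) R, A * B = 1) ↔ m ≤ n ∧ A.maxMinorsGcd = 1 := by
  constructor
  · rintro ⟨B, hAB⟩
    obtain ⟨c, hc⟩ := exists_strictMono_of_mul_eq_one hAB
    exact ⟨Fin.le_of_injective c hc.injective, maxMinorsGcd_eq_one_of_mul_eq_one hAB⟩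
  · rintro ⟨-, hgcd⟩
    obtain ⟨μ, hμ⟩ := Finset.gcd_eq_sum_mul _ fun c => (A.submatrix id c).det
    exact exists_mul_eq_one_of_sum_det_submatrix_mul_eq_one A _ μ (hμ.symm.trans hgcd)

end GCD

end Matrix

theorem stmt0_general (m n : ℕ) (A : Matrix (Fin m) (Fin n) ℤ) :
    (∃ B : Matrix (Fin n) (Fin m) ℤ, A * B = 1) ↔
      (m ≤ n ∧
        Finset.gcd
          ((Finset.univ : Finset (Fin m → Fin n)).filter
            (fun c => ∀ a b : Fin m, a < b → c a < c b))
          (fun c => (A.submatrix id c).det) = 1) :=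
  A.exists_mul_eq_one_iff

/-- For an `m × n` integer matrix `A` (with `m, n ≥ 1`), there exists an
`n × m` integer matrix `B` with `A * B = 1` if and only if `m ≤ n` and the gcd of all
`m × m` minors of `A` (determinants of submatrices obtained by selecting `m` of the `n`
columns, i.e. via strictly monotone column selections) is `1`. -/
theorem stmt0 (m n : ℕ) (hm : 0 < m) (hn : 0 < n) (A : Matrix (Fin m) (Fin n) ℤ) :
    (∃ B : Matrix (Fin n) (Fin m) ℤ, A * B = 1) ↔
      (m ≤ n ∧
        Finset.gcd
          ((Finset.univ : Finset (Fin m → Fin n)).filter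
            (fun c => ∀ a b : Fin m, a < b → c a < c b))
          (fun c => (A.submatrix id c).det) = 1) :=
  stmt0_general m n A
end

section
/- Let n ≥ 3. For each m ∈ {1,…,n}, let σ_m be a permutation of the set {1,…,n}∖{m} that is a single (n−1)-cycle, i.e., whose cyclic group acts transitively on {1,…,n}∖{m}. Let G be the bipartite graph on the 2n vertices {v_1^+,…,v_n^+} ∪ {v_1^−,…,v_n^−} in which v_i^+ and v_j^− are adjacent if and only if there exists m ∈ {1,…,n} with i ≠ m and σ_m(i) = j. Then G is connected. -/
/-!
Fix a vertex and let `A`, `B` be the indices `i` for which `v_i^+`, resp. `v_i^-`, lies in its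
component. Since `v_i^+` is adjacent to `v_{σ_m i}^-`, each `σ_m` maps `A ∖ {m}` bijectively onto
`B ∖ {m}`. Summing `|A ∖ {m}| = |B ∖ {m}|` over `m` gives `(n - 1)|A| = (n - 1)|B|`, so `|A| = |B|`
and then `m ∈ A ↔ m ∈ B` for every `m`: `A = B`. Hence `A ∖ {m}` is `σ_m`-invariant, and since
`n ≥ 3` any index `i` can be reached from a point of `A` by a power of some `σ_m` with `m` distinct
from both, so `A` contains every index.
-/

open Finset

namespace Finset

variable {α : Type*} [Fintype α] [DecidableEq α]

theorem sum_card_erase_add_card (s : Finset α) :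
    ∑ a, #(s.erase a) + #s = Fintype.card α * #s := by
  calc ∑ a, #(s.erase a) + #s = ∑ a, (#(s.erase a) + if a ∈ s then 1 else 0) := by
        rw [sum_add_distrib, sum_boole, filter_mem_eq_inter, univ_inter, Nat.cast_id]
    _ = ∑ _a : α, #s := sum_congr rfl fun a _ => by
        split_ifs with h
        · exact card_erase_add_one h
        · rw [erase_eq_of_notMem h, add_zero]
    _ = Fintype.card α * #s := by rw [sum_const, card_univ, smul_eq_mul]

theorem eq_of_forall_card_erase_eq (hα : 2 ≤ Fintype.card α) {A B : Finset α}
    (h : ∀ a, #(A.erase a) = #(B.erase a)) : A = B := by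
  have hcard : #A = #B := by
    have hsumA := sum_card_erase_add_card A
    have hsumB := sum_card_erase_add_card B
    rw [sum_congr rfl fun a _ => h a] at hsumA
    nlinarith
  ext a
  have ha := h a
  rw [card_erase_eq_ite, card_erase_eq_ite] at ha
  split_ifs at ha with hA hB hB
  · exact iff_of_true hA hB
  · have := card_pos.2 ⟨a, hA⟩; omega
  · have := card_pos.2 ⟨a, hB⟩; omega
  · exact iff_of_false hA hB

variable {σ : α → Equiv.Perm α}

theorem eq_of_forall_mem_iff_perm_apply_mem (hα : 2 ≤ Fintype.card α)
    (hfix : ∀ m, σ m m = m) {A B : Finset α}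
    (hAB : ∀ m i, i ≠ m → (i ∈ A ↔ σ m i ∈ B)) : A = B := by
  refine eq_of_forall_card_erase_eq hα fun m => ?_
  rw [← card_map (σ m).toEmbedding]
  congr 1
  ext j
  have hjm : (σ m).symm j ≠ m ↔ j ≠ m := by
    rw [Ne, Equiv.symm_apply_eq, hfix]
  rw [mem_map_equiv, mem_erase, mem_erase, hjm]
  exact and_congr_right fun h =>
    (hAB m _ (hjm.2 h)).trans (by rw [Equiv.apply_symm_apply])

theorem eq_univ_of_perm_apply_mem (hα : 3 ≤ Fintype.card α) (hfix : ∀ m, σ m m = m)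
    (hcyc : ∀ m i j, i ≠ m → j ≠ m → ∃ p : ℕ, (σ m ^ p) i = j) {A : Finset α}
    (hA : ∀ m i, i ≠ m → i ∈ A → σ m i ∈ A) (hne : A.Nonempty) : A = univ := by
  obtain ⟨b, hb⟩ := hne
  refine eq_univ_of_forall fun i => ?_
  obtain ⟨m, -, hm⟩ : ∃ m ∈ univ, m ∉ ({b, i} : Finset α) :=
    exists_mem_notMem_of_card_lt_card <| (card_le_two).trans_lt <| by
      rw [card_univ]; omega
  rw [mem_insert, mem_singleton, not_or] at hm
  obtain ⟨p, rfl⟩ := hcyc m b i (Ne.symm hm.1) (Ne.symm hm.2)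
  have hmaps : Set.MapsTo (σ m) {x | x ∈ A ∧ x ≠ m} {x | x ∈ A ∧ x ≠ m} :=
    fun x ⟨hx, hxm⟩ => ⟨hA m x hxm hx, fun h => hxm ((σ m).injective (h.trans (hfix m).symm))⟩
  rw [Equiv.Perm.coe_pow]
  exact (hmaps.iterate p ⟨hb, Ne.symm hm.1⟩).1

end Finset

namespace SimpleGraph

variable {α : Type*} [Fintype α] {σ : α → Equiv.Perm α}

theorem connected_of_adj_inl_inr_perm (hα : 3 ≤ Fintype.card α) (hfix : ∀ m, σ m m = m)
    (hcyc : ∀ m i j, i ≠ m → j ≠ m → ∃ p : ℕ, (σ m ^ p) i = j) {G : SimpleGraph (α ⊕ α)}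
    (hadj : ∀ i m, i ≠ m → G.Adj (.inl i) (.inr (σ m i))) : G.Connected := by
  classical
  obtain ⟨b⟩ : Nonempty α := Fintype.card_pos_iff.1 (by omega)
  set A : Finset α := {i | G.Reachable (.inl b) (.inl i)}
  set B : Finset α := {j | G.Reachable (.inl b) (.inr j)}
  have hAB : ∀ m i, i ≠ m → (i ∈ A ↔ σ m i ∈ B) := fun m i hi => by
    simp only [A, B, mem_filter_univ]
    exact ⟨fun h => h.trans (hadj i m hi).reachable, fun h => h.trans (hadj i m hi).reachable.symm⟩
  have hA_eq_B : A = B := eq_of_forall_mem_iff_perm_apply_mem (by omega) hfix hAB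
  have hA : A = univ := eq_univ_of_perm_apply_mem hα hfix hcyc
    (fun m i hi h => hA_eq_B ▸ (hAB m i hi).1 h) ⟨b, by simp [A]⟩
  refine (connected_iff_exists_forall_reachable G).2 ⟨.inl b, ?_⟩
  rintro (i | j)
  · exact (mem_filter_univ i).1 (hA ▸ mem_univ i : i ∈ A)
  · exact (mem_filter_univ j).1 (hA_eq_B ▸ hA ▸ mem_univ j : j ∈ B)

end SimpleGraph

/-- Let `n ≥ 3`. For each `m`, let `σ m` be a permutation of `Fin n` fixing
`m`, whose cyclic group acts transitively on the complement of `{m}` (i.e. `σ m` is a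
single `(n-1)`-cycle on that complement). The bipartite graph on `Fin n ⊕ Fin n`
(left = plus vertices, right = minus vertices) in which `inl i` and `inr j` are adjacent
iff there is `m` with `i ≠ m` and `σ m i = j`, is connected. -/
theorem stmt4 (n : ℕ) (hn : 3 ≤ n) (σ : Fin n → Equiv.Perm (Fin n))
    (hfix : ∀ m : Fin n, σ m m = m)
    (hcyc : ∀ m i j : Fin n, i ≠ m → j ≠ m → ∃ p : ℕ, ((σ m) ^ p) i = j) :
    (SimpleGraph.fromRel
      (fun x y : Fin n ⊕ Fin n =>
        ∃ i j m : Fin n, x = Sum.inl i ∧ y = Sum.inr j ∧ i ≠ m ∧ σ m i = j)).Connected := by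
  refine SimpleGraph.connected_of_adj_inl_inr_perm (by rwa [Fintype.card_fin]) hfix hcyc
    fun i m him => ?_
  rw [SimpleGraph.fromRel_adj]
  exact ⟨by simp, .inl ⟨i, σ m i, m, rfl, rfl, him, rfl⟩⟩
end

section
/- Let n ≥ 3. For each m ∈ {1,…,n}, let σ_m be a permutation of the set {1,…,n}∖{m} that is a single (n−1)-cycle, i.e., whose cyclic group acts transitively on {1,…,n}∖{m}. Let G be the bipartite graph on the 2n vertices {v_1^+,…,v_n^+} ∪ {v_1^−,…,v_n^−} in which v_i^+ and v_j^− are adjacent if and only if there exists m with i ≠ m and σ_m(i) = j. Suppose the vertex set of G is partitioned into two nonempty sets V_1 and V_2 such that no edge of G joins a vertex of V_1 to a vertex of V_2. Then for every m ∈ {1,…,n}, v_m^+ ∈ V_1 if and only if v_m^− ∈ V_1. -/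
/-!
Let `A` (resp. `B`) be the indices of the plus (resp. minus) vertices lying in `V₁`. Since
`V₁` is a union of connected components, the edges `v_i^+ — v_{σ_m i}^-` show that `σ_m`
maps `A ∖ {m}` bijectively onto `B ∖ {m}`, so `|A ∖ {m}| = |B ∖ {m}|` for every `m`.
Summing over `m` gives `(n - 1) |A| = (n - 1) |B|`, hence `|A| = |B|`, and then
`m ∈ A ↔ m ∈ B` for every `m`.
-/

open Finset

section

variable {α : Type*} [DecidableEq α]

theorem Finset.card_erase_eq_card_erase_of_perm {f : Equiv.Perm α} {m : α} (hf : f m = m)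
    {A B : Finset α} (h : ∀ i, i ≠ m → (i ∈ A ↔ f i ∈ B)) :
    #(A.erase m) = #(B.erase m) := by
  have hf' : f.symm m = m := by rw [Equiv.symm_apply_eq, hf]
  refine card_nbij' f f.symm ?_ ?_ (fun i _ => f.symm_apply_apply i)
    (fun j _ => f.apply_symm_apply j)
  · intro i hi
    obtain ⟨him, hiA⟩ := mem_erase.mp hi
    exact mem_erase.mpr ⟨fun hfi => him (f.injective (hfi.trans hf.symm)), (h i him).mp hiA⟩
  · intro j hj
    obtain ⟨hjm, hjB⟩ := mem_erase.mp hj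
    have him : f.symm j ≠ m := fun hfj => hjm (f.symm.injective (hfj.trans hf'.symm))
    exact mem_erase.mpr ⟨him, (h _ him).mpr (by rwa [f.apply_symm_apply])⟩

theorem Finset.eq_of_forall_card_erase_eq_s6 [Fintype α] [Nontrivial α] {A B : Finset α}
    (h : ∀ m, #(A.erase m) = #(B.erase m)) : A = B := by
  have card_eq (s : Finset α) (m : α) : (#s : ℤ) = #(s.erase m) + if m ∈ s then 1 else 0 := by
    split_ifs with hm
    · exact_mod_cast (card_erase_add_one hm).symm
    · simp [erase_eq_of_notMem hm]
  set d : α → ℤ := fun m => (if m ∈ A then 1 else 0) - if m ∈ B then 1 else 0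
  have hd (m : α) : d m = #A - #B := by
    simp only [d, card_eq A m, card_eq B m, h m]
    ring
  have hsum : ∑ m, d m = #A - #B := by
    simp [d, sum_sub_distrib]
  have hcard : (#A : ℤ) = #B := by
    simp only [hd, sum_const, card_univ, nsmul_eq_mul] at hsum
    have : (1 : ℤ) < Fintype.card α := by exact_mod_cast Fintype.one_lt_card
    nlinarith
  ext m
  have := hd m
  rw [hcard, sub_self] at this
  by_cases hA : m ∈ A <;> by_cases hB : m ∈ B <;> simp [d, hA, hB] at this ⊢

end

theorem SimpleGraph.mem_iff_mem_of_adj {V : Type*} [Fintype V] [DecidableEq V]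
    {G : SimpleGraph V} {V₁ V₂ : Finset V} (hunion : V₁ ∪ V₂ = univ)
    (hsep : ∀ x ∈ V₁, ∀ y ∈ V₂, ¬ G.Adj x y) {x y : V} (hxy : G.Adj x y) :
    x ∈ V₁ ↔ y ∈ V₁ := by
  have mem_or (z : V) : z ∈ V₁ ∨ z ∈ V₂ := mem_union.mp (hunion ▸ mem_univ z)
  constructor
  · exact fun hx => (mem_or y).resolve_right fun hy => hsep x hx y hy hxy
  · exact fun hy => (mem_or x).resolve_right fun hx => hsep y hy x hx hxy.symm

theorem stmt6_general (n : ℕ) (hn : 3 ≤ n) (σ : Fin n → Equiv.Perm (Fin n))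
    (hfix : ∀ m : Fin n, σ m m = m)
    (V₁ V₂ : Finset (Fin n ⊕ Fin n))
    (hunion : V₁ ∪ V₂ = Finset.univ)
    (hsep : ∀ x ∈ V₁, ∀ y ∈ V₂,
      ¬ (SimpleGraph.fromRel
          (fun x y : Fin n ⊕ Fin n =>
            ∃ i j m : Fin n, x = Sum.inl i ∧ y = Sum.inr j ∧ i ≠ m ∧ σ m i = j)).Adj x y) :
    ∀ m : Fin n, Sum.inl m ∈ V₁ ↔ Sum.inr m ∈ V₁ := by
  have : Nontrivial (Fin n) := Fin.nontrivial_iff_two_le.mpr (by omega)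
  have hstep (m i : Fin n) (him : i ≠ m) : Sum.inl i ∈ V₁ ↔ Sum.inr (σ m i) ∈ V₁ :=
    SimpleGraph.mem_iff_mem_of_adj hunion hsep ⟨by simp, Or.inl ⟨i, σ m i, m, rfl, rfl, him, rfl⟩⟩
  have hAB : univ.filter (fun i => Sum.inl i ∈ V₁) = univ.filter (fun j => Sum.inr j ∈ V₁) :=
    eq_of_forall_card_erase_eq_s6 fun m =>
      card_erase_eq_card_erase_of_perm (hfix m) fun i him => by simpa using hstep m i him
  intro m
  simpa using congr(m ∈ $hAB)

/-- With `n ≥ 3` and `σ` as in Statement 4, if the vertex set of the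
bipartite graph `G` on `Fin n ⊕ Fin n` (adjacency: `inl i ~ inr j` iff `∃ m, i ≠ m ∧
σ m i = j`) is partitioned into two nonempty sets `V₁`, `V₂` with no edge of `G`
joining `V₁` to `V₂`, then for every `m`, the plus vertex `inl m` lies in `V₁` if and
only if the minus vertex `inr m` lies in `V₁`. -/
theorem stmt6 (n : ℕ) (hn : 3 ≤ n) (σ : Fin n → Equiv.Perm (Fin n))
    (hfix : ∀ m : Fin n, σ m m = m)
    (hcyc : ∀ m i j : Fin n, i ≠ m → j ≠ m → ∃ p : ℕ, ((σ m) ^ p) i = j)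
    (V₁ V₂ : Finset (Fin n ⊕ Fin n))
    (hne₁ : V₁.Nonempty) (hne₂ : V₂.Nonempty)
    (hdisj : Disjoint V₁ V₂) (hunion : V₁ ∪ V₂ = Finset.univ)
    (hsep : ∀ x ∈ V₁, ∀ y ∈ V₂,
      ¬ (SimpleGraph.fromRel
          (fun x y : Fin n ⊕ Fin n =>
            ∃ i j m : Fin n, x = Sum.inl i ∧ y = Sum.inr j ∧ i ≠ m ∧ σ m i = j)).Adj x y) :
    ∀ m : Fin n, Sum.inl m ∈ V₁ ↔ Sum.inr m ∈ V₁ :=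
  stmt6_general n hn σ hfix V₁ V₂ hunion hsep
end

section
/- Let n ≥ 2 and let k_1, …, k_n be integers with k_i ≥ 1 for all i and k_1 k_2 ⋯ k_n ≥ 3. Then there is no n×n integer matrix B such that A·B equals the n×n identity matrix, where A = (a_{ij}) is the n×n matrix with a_{ii} = k_i for 1 ≤ i ≤ n, a_{i,i+1} = −1 for 1 ≤ i ≤ n−1, a_{n,1} = −1, and a_{ij} = 0 otherwise. -/
/-!
With `v i = k 0 ⋯ k (i-1)` the prefix products, `A v = (k 0 ⋯ k (n-1) - 1) e_{n-1}`: each row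
`k i v i - v (i+1)` telescopes to zero except the wrap-around row. If `A B = 1` then `B A = 1`,
so `v = B (A v)` has all entries divisible by `∏ k - 1`; as `v 0 = 1`, `∏ k - 1` is a unit.
-/

open Matrix Finset

variable {R : Type*} [CommRing R]

theorem Matrix.dvd_of_mul_eq_one_of_dvd_mulVec {ι : Type*} [Fintype ι] [DecidableEq ι]
    {A B : Matrix ι ι R} (hAB : A * B = 1) {v : ι → R} {c : R} (hc : ∀ i, c ∣ (A *ᵥ v) i)
    (i : ι) : c ∣ v i := by
  have hv : B *ᵥ (A *ᵥ v) = v := by rw [mulVec_mulVec, mul_eq_one_comm.mp hAB, one_mulVec]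
  rw [← hv]
  exact dvd_sum fun j _ => dvd_mul_of_dvd_right (hc j) _

def cyclicBidiagonal (n : ℕ) (k : Fin n → R) : Matrix (Fin n) (Fin n) R :=
  Matrix.of fun i j =>
    if i = j then k i
    else if (j : ℕ) = (i : ℕ) + 1 then -1
    else if (i : ℕ) = n - 1 ∧ (j : ℕ) = 0 then -1
    else 0

theorem cyclicBidiagonal_apply {n : ℕ} (hn : 1 < n) (k : Fin n → R) (i j : Fin n) :
    cyclicBidiagonal n k i j =
      (if i = j then k i else 0) - if j = finRotate n i then 1 else 0 := by
  obtain ⟨m, rfl⟩ : ∃ m, n = m + 1 := ⟨n - 1, by omega⟩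
  have hrot : (finRotate (m + 1) i : ℕ) = if i = Fin.last m then 0 else (i : ℕ) + 1 :=
    coe_finRotate i
  simp only [cyclicBidiagonal, of_apply, Fin.ext_iff, Fin.val_last] at hrot ⊢
  have := j.isLt
  split_ifs at hrot ⊢ <;> first | omega | simp

theorem cyclicBidiagonal_mulVec {n : ℕ} (hn : 1 < n) (k v : Fin n → R) (i : Fin n) :
    (cyclicBidiagonal n k *ᵥ v) i = k i * v i - v (finRotate n i) := by
  simp only [mulVec, dotProduct, cyclicBidiagonal_apply hn, sub_mul, sum_sub_distrib, ite_mul,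
    zero_mul, one_mul, sum_ite_eq, sum_ite_eq', mem_univ, if_true]

theorem cyclicBidiagonal_mulVec_prod_Iio {n : ℕ} (hn : 1 < n) (k : Fin n → R) (i : Fin n) :
    (cyclicBidiagonal n k *ᵥ fun i => ∏ j ∈ Iio i, k j) i =
      if (i : ℕ) = n - 1 then ∏ j, k j - 1 else 0 := by
  obtain ⟨m, rfl⟩ : ∃ m, n = m + 1 := ⟨n - 1, by omega⟩
  rw [cyclicBidiagonal_mulVec hn, mul_prod_Iio_eq_prod_Iic]
  split_ifs with hi
  · obtain rfl : i = Fin.last m := Fin.ext hi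
    rw [finRotate_last, ← Fin.top_eq_last, Iic_top, Iio_eq_empty.mpr fun j _ => Fin.zero_le j,
      prod_empty]
  · have hrot := coe_finRotate_of_ne_last (i := i) (fun h => hi (by simp [h]))
    rw [sub_eq_zero]
    congr 1
    ext j
    simp only [mem_Iic, mem_Iio, Fin.le_def, Fin.lt_def, hrot]
    omega

theorem isUnit_prod_sub_one_of_cyclicBidiagonal_mul_eq_one {n : ℕ} (hn : 1 < n)
    {k : Fin n → R} {B : Matrix (Fin n) (Fin n) R} (hB : cyclicBidiagonal n k * B = 1) :
    IsUnit (∏ i, k i - 1) := by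
  have hdvd := dvd_of_mul_eq_one_of_dvd_mulVec hB (fun i => by
    rw [cyclicBidiagonal_mulVec_prod_Iio hn]
    split_ifs
    exacts [dvd_rfl, dvd_zero _]) ⟨0, by omega⟩
  have hIio : Iio (⟨0, by omega⟩ : Fin n) = ∅ := by ext j; simp [Fin.lt_def]
  rw [hIio, prod_empty] at hdvd
  exact isUnit_of_dvd_one hdvd

theorem stmt10_general (n : ℕ) (hn : 2 ≤ n) (k : Fin n → ℤ)
    (hprod : 3 ≤ ∏ i, k i) :
    ¬ ∃ B : Matrix (Fin n) (Fin n) ℤ,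
        (Matrix.of fun i j : Fin n =>
            if i = j then k i
            else if (j : ℕ) = (i : ℕ) + 1 then (-1 : ℤ)
            else if (i : ℕ) = n - 1 ∧ (j : ℕ) = 0 then (-1 : ℤ)
            else 0) * B = 1 := by
  rintro ⟨B, hB⟩
  rcases Int.isUnit_iff.mp (isUnit_prod_sub_one_of_cyclicBidiagonal_mul_eq_one hn hB) with h | h
    <;> omega

/-- For `n ≥ 2` and integers `k i ≥ 1` with `∏ k i ≥ 3`, the `n × n`
matrix with diagonal entries `k i`, superdiagonal entries `-1`, bottom-left entry `-1`,
and `0` elsewhere, admits no right inverse: there is no `n × n` integer matrix `B` with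
`A * B = 1`. -/
theorem stmt10 (n : ℕ) (hn : 2 ≤ n) (k : Fin n → ℤ)
    (hk : ∀ i, 1 ≤ k i) (hprod : 3 ≤ ∏ i, k i) :
    ¬ ∃ B : Matrix (Fin n) (Fin n) ℤ,
        (Matrix.of fun i j : Fin n =>
            if i = j then k i
            else if (j : ℕ) = (i : ℕ) + 1 then (-1 : ℤ)
            else if (i : ℕ) = n - 1 ∧ (j : ℕ) = 0 then (-1 : ℤ)
            else 0) * B = 1 :=
  stmt10_general n hn k hprod
end
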